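/- Let p ≥ 2 be an integer. If χ = C_p and α < 0, then F^p_{m,α} has no critical point in R^p. -/

import Mathlib

/-! Euler's identity for the `(1 - m)`-homogeneous `F^p_m` and the `2`-homogeneous `|X|²` gives
`⟨∇F^p_{m,α}(V), V⟩ = (1 - m) F^p_m(V) + α |V|²`. When `χ = C_p` the definition of `C_p` makes
`F^p_m ≥ 0` on `R^p`, so for `α < 0` and `V ≠ 0` the right-hand side is negative and `V` cannot
be critical. -/

open scoped BigOperators
noncomputable section

/-- Internal (diffusion) part: sum of (X_{i+1} - X_i)^(1-m) over consecutive gaps. -/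
def gapSum (m : ℝ) (p : ℕ) (X : EuclideanSpace ℝ (Fin p)) : ℝ :=
  ∑ i : Fin p, if h : (i : ℕ) + 1 < p then (X ⟨(i : ℕ) + 1, h⟩ - X i) ^ (1 - m) else 0

/-- Interaction part: sum of |X_i - X_j|^(1-m) over ordered pairs i ≠ j. -/
def pairSum (m : ℝ) (p : ℕ) (X : EuclideanSpace ℝ (Fin p)) : ℝ :=
  ∑ i : Fin p, ∑ j : Fin p, if i ≠ j then |X i - X j| ^ (1 - m) else 0

/-- The discrete free energy F^p_m. -/
def FF (m χ : ℝ) (p : ℕ) (X : EuclideanSpace ℝ (Fin p)) : ℝ :=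
  (m - 1)⁻¹ * gapSum m p X - (χ / (m - 1)) * pairSum m p X

/-- Membership in R^p: strictly increasing with zero mean. -/
def memR (p : ℕ) (X : EuclideanSpace ℝ (Fin p)) : Prop :=
  (StrictMono fun i => X i) ∧ ∑ i, X i = 0

/-- The critical constant C_p, with 1/C_p the sup of the HLS ratio. -/
def Cp (m : ℝ) (p : ℕ) : ℝ :=
  (sSup {r : ℝ | ∃ X : EuclideanSpace ℝ (Fin p), memR p X ∧
    r = pairSum m p X / gapSum m p X})⁻¹

/-- The functional F^p_{m,α} with confining quadratic potential. -/
def FFa (m χ α : ℝ) (p : ℕ) (X : EuclideanSpace ℝ (Fin p)) : ℝ :=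
  FF m χ p X + α / 2 * ‖X‖ ^ 2

/-- H^N_{m+1}(Y) = |∇F^N_m(Y)|² − ((m−1) F^N_m(Y))². -/
def Hfun (m χ : ℝ) (N : ℕ) (Y : EuclideanSpace ℝ (Fin N)) : ℝ :=
  ‖gradient (FF m χ N) Y‖ ^ 2 - ((m - 1) * FF m χ N Y) ^ 2

/-- X : [0,T) → R^N is a solution of the gradient flow of F^N_m. -/
def isGFlow (m χ : ℝ) (N : ℕ) (T : ℝ) (X : ℝ → EuclideanSpace ℝ (Fin N)) : Prop :=
  ∀ t ∈ Set.Ico (0 : ℝ) T, memR N (X t) ∧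
    HasDerivWithinAt X (-(gradient (FF m χ N) (X t))) (Set.Ico (0 : ℝ) T) t

/-- The gap Y_{i+1} - Y_i (0 if i+1 is out of range). -/
def gapAt (N : ℕ) (Y : EuclideanSpace ℝ (Fin N)) (i : ℕ) : ℝ :=
  if h : i + 1 < N then Y ⟨i + 1, h⟩ - Y ⟨i, Nat.lt_of_succ_lt h⟩ else 0

lemma fderiv_apply_self_of_homogeneous {E : Type*} [NormedAddCommGroup E] [NormedSpace ℝ E]
    {f : E → ℝ} {x : E} {k : ℝ} (hf : DifferentiableAt ℝ f x)
    (hhom : ∀ t : ℝ, 0 < t → f (t • x) = t ^ k * f x) :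
    fderiv ℝ f x x = k * f x := by
  have hline : HasDerivAt (fun t : ℝ => t • x) x 1 := by
    simpa using (hasDerivAt_id (1 : ℝ)).smul_const x
  have hchain : HasDerivAt (fun t : ℝ => f (t • x)) (fderiv ℝ f x x) 1 :=
    hf.hasFDerivAt.comp_hasDerivAt_of_eq 1 hline (one_smul ℝ x).symm
  have hpow : HasDerivAt (fun t : ℝ => t ^ k * f x) (k * f x) 1 := by
    simpa using (Real.hasDerivAt_rpow_const (x := 1) (p := k) (Or.inl one_ne_zero)).mul_const (f x)
  refine hchain.unique (hpow.congr_of_eventuallyEq ?_)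
  filter_upwards [eventually_gt_nhds zero_lt_one] with t ht using hhom t ht

section

variable {m χ : ℝ} {p : ℕ} {V : EuclideanSpace ℝ (Fin p)}

lemma gap_pos_of_strictMono (hmono : StrictMono fun i => V i) (i : Fin p) (h : (i : ℕ) + 1 < p) :
    0 < V ⟨(i : ℕ) + 1, h⟩ - V i :=
  sub_pos.mpr (hmono (Nat.lt_succ_self _))

lemma gapSum_pos (hp : 2 ≤ p) (hmono : StrictMono fun i => V i) : 0 < gapSum m p V := by
  have h0 : (0 : ℕ) + 1 < p := by omega
  refine Finset.sum_pos' (fun i _ => ?_) ⟨⟨0, by omega⟩, Finset.mem_univ _, ?_⟩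
  · split_ifs with h
    exacts [(Real.rpow_pos_of_pos (gap_pos_of_strictMono hmono i h) _).le, le_rfl]
  · rw [dif_pos h0]
    exact Real.rpow_pos_of_pos (gap_pos_of_strictMono hmono _ h0) _

lemma pairSum_nonneg : 0 ≤ pairSum m p V :=
  Finset.sum_nonneg fun _ _ => Finset.sum_nonneg fun _ _ => by
    split_ifs
    exacts [Real.rpow_nonneg (abs_nonneg _) _, le_rfl]

lemma differentiableAt_gapSum (hmono : StrictMono fun i => V i) :
    DifferentiableAt ℝ (gapSum m p) V := by
  refine DifferentiableAt.fun_sum fun i _ => ?_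
  by_cases h : (i : ℕ) + 1 < p
  · simp only [dif_pos h]
    exact (((EuclideanSpace.proj _).differentiableAt.sub
      (EuclideanSpace.proj i).differentiableAt).rpow_const
      (Or.inl (gap_pos_of_strictMono hmono i h).ne'))
  · simp only [dif_neg h, differentiableAt_const]

lemma differentiableAt_pairSum (hmono : StrictMono fun i => V i) :
    DifferentiableAt ℝ (pairSum m p) V := by
  refine DifferentiableAt.fun_sum fun i _ => DifferentiableAt.fun_sum fun j _ => ?_
  by_cases h : i ≠ j
  · simp only [if_pos h]
    have hne : V i - V j ≠ 0 := sub_ne_zero.mpr (hmono.injective.ne h)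
    exact (((EuclideanSpace.proj i).differentiableAt.sub
      (EuclideanSpace.proj j).differentiableAt).abs hne).rpow_const
      (Or.inl (abs_ne_zero.mpr hne))
  · simp only [if_neg h, differentiableAt_const]

lemma differentiableAt_FF (hmono : StrictMono fun i => V i) :
    DifferentiableAt ℝ (FF m χ p) V :=
  ((differentiableAt_gapSum hmono).const_mul _).sub ((differentiableAt_pairSum hmono).const_mul _)

lemma gapSum_smul (hmono : StrictMono fun i => V i) {t : ℝ} (ht : 0 < t) :
    gapSum m p (t • V) = t ^ (1 - m) * gapSum m p V := by
  simp only [gapSum, Finset.mul_sum, PiLp.smul_apply, smul_eq_mul, ← mul_sub]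
  refine Finset.sum_congr rfl fun i _ => ?_
  split_ifs with h
  exacts [Real.mul_rpow ht.le (gap_pos_of_strictMono hmono i h).le, (mul_zero _).symm]

lemma pairSum_smul {t : ℝ} (ht : 0 < t) :
    pairSum m p (t • V) = t ^ (1 - m) * pairSum m p V := by
  simp only [pairSum, Finset.mul_sum, PiLp.smul_apply, smul_eq_mul, ← mul_sub, abs_mul,
    abs_of_pos ht]
  refine Finset.sum_congr rfl fun i _ => Finset.sum_congr rfl fun j _ => ?_
  split_ifs
  exacts [Real.mul_rpow ht.le (abs_nonneg _), (mul_zero _).symm]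

lemma FF_smul (hmono : StrictMono fun i => V i) {t : ℝ} (ht : 0 < t) :
    FF m χ p (t • V) = t ^ (1 - m) * FF m χ p V := by
  simp only [FF, gapSum_smul hmono ht, pairSum_smul ht]
  ring

lemma Cp_mul_pairSum_le_gapSum (hp : 2 ≤ p) (hV : memR p V) :
    Cp m p * pairSum m p V ≤ gapSum m p V := by
  set S := {r : ℝ | ∃ X : EuclideanSpace ℝ (Fin p), memR p X ∧
    r = pairSum m p X / gapSum m p X}
  have hgap := gapSum_pos (m := m) hp hV.1
  rcases le_or_gt (sSup S) 0 with hS | hS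
  · have hCp : Cp m p ≤ 0 := inv_nonpos.mpr hS
    nlinarith [pairSum_nonneg (m := m) (V := V)]
  · -- `sSup` of a set unbounded above is `0`
    have hbdd : BddAbove S := by
      by_contra h
      exact hS.ne' (Real.sSup_of_not_bddAbove h)
    have hratio : pairSum m p V / gapSum m p V ≤ sSup S := le_csSup hbdd ⟨V, hV, rfl⟩
    calc Cp m p * pairSum m p V ≤ (sSup S)⁻¹ * (sSup S * gapSum m p V) :=
          mul_le_mul_of_nonneg_left ((div_le_iff₀ hgap).mp hratio) (inv_nonneg.mpr hS.le)
      _ = gapSum m p V := by field_simp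

lemma FF_nonneg_of_le_Cp (hm : 1 < m) (hp : 2 ≤ p) (hχ : χ ≤ Cp m p) (hV : memR p V) :
    0 ≤ FF m χ p V := by
  have hpair : χ * pairSum m p V ≤ gapSum m p V :=
    (mul_le_mul_of_nonneg_right hχ pairSum_nonneg).trans (Cp_mul_pairSum_le_gapSum hp hV)
  have hFF : FF m χ p V = (gapSum m p V - χ * pairSum m p V) / (m - 1) := by
    rw [FF]; ring
  rw [hFF]
  exact div_nonneg (sub_nonneg.mpr hpair) (by linarith)

lemma fderiv_FFa_apply_self {α : ℝ} (hmono : StrictMono fun i => V i) :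
    fderiv ℝ (FFa m χ α p) V V = (1 - m) * FF m χ p V + α * ‖V‖ ^ 2 := by
  have hquad : DifferentiableAt ℝ (fun X : EuclideanSpace ℝ (Fin p) => α / 2 * ‖X‖ ^ 2) V :=
    (differentiableAt_id.norm_sq ℝ).const_mul _
  have hquad_hom : ∀ t : ℝ, 0 < t → α / 2 * ‖t • V‖ ^ 2 = t ^ (2 : ℝ) * (α / 2 * ‖V‖ ^ 2) := by
    intro t ht
    rw [norm_smul, Real.norm_of_nonneg ht.le, Real.rpow_two]
    ring
  change fderiv ℝ (fun X => FF m χ p X + α / 2 * ‖X‖ ^ 2) V V = _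
  rw [fderiv_fun_add (differentiableAt_FF hmono) hquad, add_apply,
    fderiv_apply_self_of_homogeneous (differentiableAt_FF hmono) (fun t ht => FF_smul hmono ht),
    fderiv_apply_self_of_homogeneous hquad hquad_hom]
  ring

end

theorem stmt5_general (m χ : ℝ) (hm : 1 < m) (p : ℕ) (hp : 2 ≤ p)
    (α : ℝ) (hα : α < 0) (heq : χ = Cp m p) :
    ¬ ∃ V : EuclideanSpace ℝ (Fin p), memR p V ∧ gradient (FFa m χ α p) V = 0 := by
  rintro ⟨V, hV, hcrit⟩
  have hfderiv : fderiv ℝ (FFa m χ α p) V = 0 := by simpa [gradient] using hcrit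
  have heuler : (1 - m) * FF m χ p V + α * ‖V‖ ^ 2 = 0 := by
    rw [← fderiv_FFa_apply_self hV.1, hfderiv, zero_apply]
  have hV0 : V ≠ 0 := fun h => by
    simpa [h] using hV.1 (show (⟨0, by omega⟩ : Fin p) < ⟨1, by omega⟩ from Nat.zero_lt_one)
  have hFF := FF_nonneg_of_le_Cp hm hp heq.le hV
  have hnorm : 0 < ‖V‖ ^ 2 := by positivity
  nlinarith

theorem stmt5 (m χ : ℝ) (hm : 1 < m) (hχ : 0 < χ) (p : ℕ) (hp : 2 ≤ p)
    (α : ℝ) (hα : α < 0) (heq : χ = Cp m p) :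
    ¬ ∃ V : EuclideanSpace ℝ (Fin p), memR p V ∧ gradient (FFa m χ α p) V = 0 :=
  stmt5_general m χ hm p hp α hα heq
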